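/- On U = {(x,y) ∈ ℝ² : x > y}, the vector fields X₁ = (1,1), X₂ = (x,y), X₃ = (x²,y²) (the class I₄, sl(2) of type II) are Hamiltonian with respect to the symplectic form ω = (x−y)^{−2} dx∧dy with Hamiltonian functions h₁ = 1/(x−y), h₂ = (x+y)/(2(x−y)), h₃ = xy/(x−y), respectively (i.e. ∂h_i/∂x = −(x−y)^{−2}·X_i² and ∂h_i/∂y = (x−y)^{−2}·X_i¹). Moreover, under the Poisson bracket {g,h}_ω = (x−y)²(∂g/∂x·∂h/∂y − ∂g/∂y·∂h/∂x) these satisfy {h₁,h₂}_ω = −h₁, {h₁,h₃}_ω = −2h₂, {h₂,h₃}_ω = −h₃, so ⟨h₁,h₂,h₃⟩ is a Lie algebra isomorphic to sl(2). -/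

import Mathlib

namespace Stmt9

/-- Partial derivative in the x-direction. -/
noncomputable def pdx (f : ℝ × ℝ → ℝ) (p : ℝ × ℝ) : ℝ := fderiv ℝ f p (1, 0)

/-- Partial derivative in the y-direction. -/
noncomputable def pdy (f : ℝ × ℝ → ℝ) (p : ℝ × ℝ) : ℝ := fderiv ℝ f p (0, 1)

/-- Poisson bracket induced by ω = (x−y)⁻² dx∧dy. -/
noncomputable def pbw (g h : ℝ × ℝ → ℝ) (p : ℝ × ℝ) : ℝ :=
  (p.1 - p.2) ^ 2 * (pdx g p * pdy h p - pdy g p * pdx h p)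

/-- Domain: {x > y}. -/
def U : Set (ℝ × ℝ) := {p | p.1 > p.2}

/-- Basis of the class I₄, sl(2) of type II. -/
def X1 : ℝ × ℝ → ℝ × ℝ := fun _ => (1, 1)
def X2 : ℝ × ℝ → ℝ × ℝ := fun p => (p.1, p.2)
def X3 : ℝ × ℝ → ℝ × ℝ := fun p => (p.1 ^ 2, p.2 ^ 2)

noncomputable def h1 : ℝ × ℝ → ℝ := fun p => 1 / (p.1 - p.2)
noncomputable def h2 : ℝ × ℝ → ℝ := fun p => (p.1 + p.2) / (2 * (p.1 - p.2))
noncomputable def h3 : ℝ × ℝ → ℝ := fun p => p.1 * p.2 / (p.1 - p.2)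

/-! Every field `(Q(x), Q(y))` with `Q(t) = a + b t + c t²` is Hamiltonian for `ω` with
Hamiltonian `(a + b (x + y) / 2 + c x y) / (x - y)`. Since `Q(x) Q'(y) - Q'(x) Q(y)` is
antisymmetric in `x, y`, it is divisible by `x - y`, so the bracket of two such Hamiltonians
is again of this form, with coefficients bilinear in those of the factors. -/

lemma pdx_eq_deriv {f : ℝ × ℝ → ℝ} {p : ℝ × ℝ} (hf : DifferentiableAt ℝ f p) :
    pdx f p = deriv (fun x => f (x, p.2)) p.1 :=
  ((hf.hasFDerivAt.comp_hasDerivAt p.1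
    ((hasDerivAt_id p.1).prodMk (hasDerivAt_const p.1 p.2)))).deriv.symm

lemma pdy_eq_deriv {f : ℝ × ℝ → ℝ} {p : ℝ × ℝ} (hf : DifferentiableAt ℝ f p) :
    pdy f p = deriv (fun y => f (p.1, y)) p.2 :=
  ((hf.hasFDerivAt.comp_hasDerivAt p.2
    ((hasDerivAt_const p.2 p.1).prodMk (hasDerivAt_id p.2)))).deriv.symm

def sl2Field (a b c : ℝ) : ℝ × ℝ → ℝ × ℝ :=
  fun p => (a + b * p.1 + c * p.1 ^ 2, a + b * p.2 + c * p.2 ^ 2)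

noncomputable def sl2Hamiltonian (a b c : ℝ) : ℝ × ℝ → ℝ :=
  fun p => (a + b * (p.1 + p.2) / 2 + c * p.1 * p.2) / (p.1 - p.2)

section Hamiltonian

variable {p : ℝ × ℝ} (a b c : ℝ)

lemma differentiableAt_sl2Hamiltonian (hp : p.1 - p.2 ≠ 0) :
    DifferentiableAt ℝ (sl2Hamiltonian a b c) p := by
  unfold sl2Hamiltonian
  fun_prop (disch := exact hp)

lemma pdx_sl2Hamiltonian (hp : p.1 - p.2 ≠ 0) :
    pdx (sl2Hamiltonian a b c) p = -(((p.1 - p.2) ^ 2)⁻¹ * (sl2Field a b c p).2) := by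
  rw [pdx_eq_deriv (differentiableAt_sl2Hamiltonian a b c hp)]
  have hnum : HasDerivAt (fun x => a + b * (x + p.2) / 2 + c * x * p.2)
      (b / 2 + c * p.2) p.1 :=
    ((((hasDerivAt_id' p.1).add_const p.2).const_mul b |>.div_const 2 |>.const_add a).add
      (((hasDerivAt_id' p.1).const_mul c).mul_const p.2)).congr_deriv (by ring)
  have hden : HasDerivAt (fun x => x - p.2) 1 p.1 := (hasDerivAt_id p.1).sub_const p.2
  have hsec : HasDerivAt (fun x => sl2Hamiltonian a b c (x, p.2))
      (((b / 2 + c * p.2) * (p.1 - p.2) - (a + b * (p.1 + p.2) / 2 + c * p.1 * p.2) * 1) /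
        (p.1 - p.2) ^ 2) p.1 :=
    hnum.div hden hp
  rw [hsec.deriv, sl2Field]
  field_simp
  ring

lemma pdy_sl2Hamiltonian (hp : p.1 - p.2 ≠ 0) :
    pdy (sl2Hamiltonian a b c) p = ((p.1 - p.2) ^ 2)⁻¹ * (sl2Field a b c p).1 := by
  rw [pdy_eq_deriv (differentiableAt_sl2Hamiltonian a b c hp)]
  have hnum : HasDerivAt (fun y => a + b * (p.1 + y) / 2 + c * p.1 * y)
      (b / 2 + c * p.1) p.2 :=
    ((((hasDerivAt_id' p.2).const_add p.1).const_mul b |>.div_const 2 |>.const_add a).add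
      ((hasDerivAt_id' p.2).const_mul (c * p.1))).congr_deriv (by ring)
  have hden : HasDerivAt (fun y => p.1 - y) (-1) p.2 := (hasDerivAt_id p.2).const_sub p.1
  have hsec : HasDerivAt (fun y => sl2Hamiltonian a b c (p.1, y))
      (((b / 2 + c * p.1) * (p.1 - p.2) - (a + b * (p.1 + p.2) / 2 + c * p.1 * p.2) * -1) /
        (p.1 - p.2) ^ 2) p.2 :=
    hnum.div hden hp
  rw [hsec.deriv, sl2Field]
  field_simp
  ring

lemma pbw_sl2Hamiltonian (a' b' c' : ℝ) (hp : p.1 - p.2 ≠ 0) :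
    pbw (sl2Hamiltonian a b c) (sl2Hamiltonian a' b' c') p =
      sl2Hamiltonian (a' * b - a * b') (2 * (a' * c - a * c')) (b' * c - b * c') p := by
  rw [pbw, pdx_sl2Hamiltonian _ _ _ hp, pdy_sl2Hamiltonian _ _ _ hp,
    pdx_sl2Hamiltonian _ _ _ hp, pdy_sl2Hamiltonian _ _ _ hp, sl2Hamiltonian, sl2Field,
    sl2Field]
  field_simp
  ring

end Hamiltonian

lemma X1_eq_sl2Field : X1 = sl2Field 1 0 0 := by
  funext p; simp [X1, sl2Field]

lemma X2_eq_sl2Field : X2 = sl2Field 0 1 0 := by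
  funext p; simp [X2, sl2Field]

lemma X3_eq_sl2Field : X3 = sl2Field 0 0 1 := by
  funext p; simp [X3, sl2Field]

lemma h1_eq_sl2Hamiltonian : h1 = sl2Hamiltonian 1 0 0 := by
  funext p; simp [h1, sl2Hamiltonian]

lemma h2_eq_sl2Hamiltonian : h2 = sl2Hamiltonian 0 1 0 := by
  funext p
  simp only [h2, sl2Hamiltonian, zero_add, one_mul, zero_mul, add_zero]
  rw [div_div, mul_comm]

lemma h3_eq_sl2Hamiltonian : h3 = sl2Hamiltonian 0 0 1 := by
  funext p; simp [h3, sl2Hamiltonian]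

/-- On {x > y}, the fields X₁, X₂, X₃ of I₄ (sl(2) of type II) are Hamiltonian with
respect to ω = (x−y)⁻² dx∧dy with Hamiltonian functions h₁, h₂, h₃, which close sl(2)
under the induced Poisson bracket. -/
theorem stmt_9 : ∀ p ∈ U,
    (pdx h1 p = -(((p.1 - p.2) ^ 2)⁻¹ * (X1 p).2) ∧
      pdy h1 p = ((p.1 - p.2) ^ 2)⁻¹ * (X1 p).1) ∧
    (pdx h2 p = -(((p.1 - p.2) ^ 2)⁻¹ * (X2 p).2) ∧
      pdy h2 p = ((p.1 - p.2) ^ 2)⁻¹ * (X2 p).1) ∧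
    (pdx h3 p = -(((p.1 - p.2) ^ 2)⁻¹ * (X3 p).2) ∧
      pdy h3 p = ((p.1 - p.2) ^ 2)⁻¹ * (X3 p).1) ∧
    pbw h1 h2 p = -h1 p ∧ pbw h1 h3 p = -2 * h2 p ∧ pbw h2 h3 p = -h3 p := by
  intro p hp
  have hp' : p.1 - p.2 ≠ 0 := sub_ne_zero.2 (ne_of_gt hp)
  rw [X1_eq_sl2Field, X2_eq_sl2Field, X3_eq_sl2Field,
    h1_eq_sl2Hamiltonian, h2_eq_sl2Hamiltonian, h3_eq_sl2Hamiltonian]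
  refine ⟨⟨pdx_sl2Hamiltonian _ _ _ hp', pdy_sl2Hamiltonian _ _ _ hp'⟩,
    ⟨pdx_sl2Hamiltonian _ _ _ hp', pdy_sl2Hamiltonian _ _ _ hp'⟩,
    ⟨pdx_sl2Hamiltonian _ _ _ hp', pdy_sl2Hamiltonian _ _ _ hp'⟩, ?_, ?_, ?_⟩ <;>
  · rw [pbw_sl2Hamiltonian _ _ _ _ _ _ hp']
    simp only [sl2Hamiltonian]
    ring

end Stmt9
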